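/- arXiv:0711.1200 — 5 statements merged into one kernel-verified Lean document; each statement's English description precedes it below -/
import Mathlib

section
/- Let V have basis {v_k : k ∈ ℤ}. For fixed a ∈ ℂ*, the action (t1^m t2^n).v_k = (a q^k)^n v_{k+m} defines an L-module structure on V, i.e., [x,y].v = x.(y.v) - y.(x.v) for all basis elements x, y of L and all v_k. -/
/-- Bracket of basis elements of the centerless q-analog Virasoro-like algebra. -/
noncomputable def qlBr (q : ℂ) (p r : ℤ × ℤ) : (ℤ × ℤ) →₀ ℂ :=
  if p.1 + r.1 = 0 ∧ p.2 + r.2 = 0 then 0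
  else (q ^ (p.2 * r.1) - q ^ (p.1 * r.2)) • Finsupp.single (p.1 + r.1, p.2 + r.2) 1

/-- Action of the basis element `t1^{p.1} t2^{p.2}` on the basis vector `v_k`:
`(t1^m t2^n).v_k = (a q^k)^n v_{k+m}`. -/
noncomputable def act (q a : ℂ) (p : ℤ × ℤ) (k : ℤ) : ℤ →₀ ℂ :=
  ((a * q ^ k) ^ p.2) • Finsupp.single (k + p.1) (1 : ℂ)

/-- The action extended linearly to all of `V`. -/
noncomputable def actExt (q a : ℂ) (p : ℤ × ℤ) (f : ℤ →₀ ℂ) : ℤ →₀ ℂ :=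
  f.sum fun k c => c • act q a p k

/-- The action of a general element of `L`. -/
noncomputable def actL (q a : ℂ) (x : (ℤ × ℤ) →₀ ℂ) (f : ℤ →₀ ℂ) : ℤ →₀ ℂ :=
  x.sum fun p c => c • actExt q a p f

lemma actExt_single (q a : ℂ) (p : ℤ × ℤ) (k : ℤ) (c : ℂ) :
    actExt q a p (Finsupp.single k c) =
      Finsupp.single (k + p.1) (c * (a * q ^ k) ^ p.2) := by
  rw [actExt, Finsupp.sum_single_index (by simp), act, smul_smul, Finsupp.smul_single', mul_one]

lemma qlBr_eq (q : ℂ) (p r : ℤ × ℤ) :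
    qlBr q p r = (q ^ (p.2 * r.1) - q ^ (p.1 * r.2)) • Finsupp.single (p.1 + r.1, p.2 + r.2) 1 := by
  rw [qlBr]
  split_ifs with h
  · obtain ⟨h1, h2⟩ := h
    have e1 : p.1 = -r.1 := by omega
    have e2 : p.2 = -r.2 := by omega
    rw [e1, e2]
    have : -r.2 * r.1 = -r.1 * r.2 := by ring
    rw [this]
    simp
  · rfl

/-- This action makes `V` an `L`-module: `[x,y].v = x.(y.v) - y.(x.v)` for all
basis elements `x, y` of `L` and all basis vectors `v_k`. -/
theorem act_is_module (q a : ℂ) (hq0 : q ≠ 0) (hq : ∀ n : ℕ, 0 < n → q ^ n ≠ 1)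
    (ha : a ≠ 0) (p r : ℤ × ℤ) (hp : p ≠ (0, 0)) (hr : r ≠ (0, 0)) (k : ℤ) :
    actL q a (qlBr q p r) (Finsupp.single k 1) =
      actExt q a p (actExt q a r (Finsupp.single k 1)) -
        actExt q a r (actExt q a p (Finsupp.single k 1)) := by
  rw [qlBr_eq, actL, Finsupp.smul_single', mul_one, Finsupp.sum_single_index (by simp)]
  simp only [actExt_single, one_smul, one_mul]
  rw [Finsupp.smul_single']
  have hpt : k + r.1 + p.1 = k + (p.1 + r.1) := by ring
  have hpt2 : k + p.1 + r.1 = k + (p.1 + r.1) := by ring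
  rw [hpt, hpt2, ← Finsupp.single_sub]
  congr 1
  rw [zpow_add₀ hq0]
  simp only [mul_zpow, zpow_add₀ hq0, ← zpow_mul]
  rw [zpow_add₀ ha, mul_add k, zpow_add₀ hq0]
  ring
end

section
/- Let V = ⊕_{n∈ℤ} V_n be a ℤ-graded L-module with dim V_n ≤ 1 for all n. If t1^1.(t1^{-1}.v_j) = 0 for some nonzero v_j ∈ V_j, then t1^1.V_j = 0 or t1^{-1}.V_j = 0. -/
/-- If `t1^1.(t1^{-1}.v_j) = 0` for some nonzero `v_j ∈ V_j`, then `t1^1.V_j = 0` or `t1^{-1}.V_j = 0`. -/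
theorem stmt_8_thm
    (q : ℂ) (hq0 : q ≠ 0) (hq : ∀ n : ℕ, 0 < n → q ^ n ≠ 1)
    (V : Type*) [AddCommGroup V] [Module ℂ V]
    (Vn : ℤ → Submodule ℂ V) (hdirect : DirectSum.IsInternal Vn)
    (ρ : ℤ × ℤ → V →ₗ[ℂ] V)
    (hbr : ∀ p r : ℤ × ℤ, p ≠ (0, 0) → r ≠ (0, 0) →
      ρ p ∘ₗ ρ r - ρ r ∘ₗ ρ p =
        if p + r = (0, 0) then 0
        else (q ^ (p.2 * r.1) - q ^ (p.1 * r.2)) • ρ (p + r))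
    (hgr : ∀ (p : ℤ × ℤ) (n : ℤ), p ≠ (0, 0) → ∀ v ∈ Vn n, ρ p v ∈ Vn (n + p.1))
    (hdim : ∀ n : ℤ, Module.rank ℂ (Vn n) ≤ 1)
    (j : ℤ) (v : V) (hv : v ∈ Vn j) (hv0 : v ≠ 0)
    (h : ρ (1, 0) (ρ (-1, 0) v) = 0) :
    (∀ w ∈ Vn j, ρ (1, 0) w = 0) ∨ (∀ w ∈ Vn j, ρ (-1, 0) w = 0) := by
  classical
  -- basic facts about powers of q
  have hq1 : ∀ m : ℤ, m ≠ 0 → q ^ m ≠ 1 := by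
    intro m hm h1
    rcases lt_or_gt_of_ne hm with hneg | hpos
    · have h2 : q ^ (-m) = 1 := by rw [zpow_neg, h1, inv_one]
      have h3 : q ^ ((-m).toNat) = 1 := by
        rw [← h2, ← zpow_natCast]; congr 1; omega
      exact hq (-m).toNat (by omega) h3
    · have h3 : q ^ (m.toNat) = 1 := by
        rw [← h1, ← zpow_natCast]; congr 1; omega
      exact hq m.toNat (by omega) h3
  have hqz : ∀ m : ℤ, q ^ m ≠ 0 := fun m => zpow_ne_zero m hq0
  have hsub : ∀ a b : ℤ, a ≠ b → q ^ a - q ^ b ≠ 0 := by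
    intro a b hab hs
    have heq : q ^ a = q ^ b := sub_eq_zero.mp hs
    apply hq1 (a - b) (sub_ne_zero_of_ne hab)
    rw [zpow_sub₀ hq0, heq, div_self (hqz b)]
  -- every vector of Vn n is a multiple of any fixed nonzero vector of Vn n
  have hspan : ∀ (n : ℤ) (x y : V), x ∈ Vn n → y ∈ Vn n → y ≠ 0 → ∃ c : ℂ, x = c • y := by
    intro n x y hx hy hy0
    obtain ⟨v₀, hv₀⟩ := (rank_submodule_le_one_iff' (Vn n)).mp (hdim n)
    obtain ⟨cx, hcx⟩ := Submodule.mem_span_singleton.mp (hv₀ hx)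
    obtain ⟨cy, hcy⟩ := Submodule.mem_span_singleton.mp (hv₀ hy)
    have hcy0 : cy ≠ 0 := by
      rintro rfl; rw [zero_smul] at hcy; exact hy0 hcy.symm
    refine ⟨cx / cy, ?_⟩
    rw [← hcx, ← hcy, smul_smul, div_mul_cancel₀ _ hcy0]
  -- pointwise versions of the bracket relation
  have key : ∀ (p r : ℤ × ℤ) (x : V), p ≠ (0,0) → r ≠ (0,0) → p + r ≠ (0,0) →
      ρ p (ρ r x) - ρ r (ρ p x) = (q ^ (p.2 * r.1) - q ^ (p.1 * r.2)) • ρ (p + r) x := by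
    intro p r x hp hr hpr
    have h1 := hbr p r hp hr
    rw [if_neg hpr] at h1
    have h2 := LinearMap.ext_iff.mp h1 x
    simpa using h2
  have keyc : ∀ (p r : ℤ × ℤ) (x : V), p ≠ (0,0) → r ≠ (0,0) → p + r = (0,0) →
      ρ p (ρ r x) = ρ r (ρ p x) := by
    intro p r x hp hr hpr
    have h1 := hbr p r hp hr
    rw [if_pos hpr] at h1
    have h2 := LinearMap.ext_iff.mp h1 x
    simp only [LinearMap.sub_apply, LinearMap.comp_apply, LinearMap.zero_apply] at h2
    exact sub_eq_zero.mp h2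
  -- graded membership helper
  have hmem : ∀ (p : ℤ × ℤ) (n m : ℤ) (x : V), p ≠ (0,0) → x ∈ Vn n → n + p.1 = m →
      ρ p x ∈ Vn m := by
    intro p n m x hp hx hnm
    subst hnm
    exact hgr p n hp x hx
  by_cases hA : ρ (1, 0) v = 0
  · left
    intro w hw
    obtain ⟨c, rfl⟩ := hspan j w v hw hv hv0
    rw [map_smul, hA, smul_zero]
  by_cases hB : ρ (-1, 0) v = 0
  · right
    intro w hw
    obtain ⟨c, rfl⟩ := hspan j w v hw hv hv0
    rw [map_smul, hB, smul_zero]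
  exfalso
  -- memberships
  have hAvm : ρ (1, 0) v ∈ Vn (j + 1) := hmem (1,0) j (j+1) v (by decide) hv (by norm_num)
  have hBvm : ρ (-1, 0) v ∈ Vn (j - 1) := hmem (-1,0) j (j-1) v (by decide) hv (by ring)
  -- the two operators commute
  have hBA : ρ (-1, 0) (ρ (1, 0) v) = 0 := by
    rw [← keyc (1,0) (-1,0) v (by decide) (by decide) (by decide)]
    exact h
  -- C1 : ρ (1,k) kills ρ(-1,0) v for all k
  have C1 : ∀ k : ℤ, ρ (1, k) (ρ (-1, 0) v) = 0 := by
    intro k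
    by_cases hk : k = 0
    · subst hk; exact h
    · obtain ⟨ν, hν⟩ := hspan (j-1) (ρ (0, k) (ρ (-1, 0) v)) (ρ (-1, 0) v)
        (hmem (0,k) (j-1) (j-1) _ (by simp [Prod.ext_iff, hk]) hBvm (by ring)) hBvm hB
      have hk1 := key (0,k) (1,0) (ρ (-1, 0) v)
        (by simp [Prod.ext_iff, hk]) (by decide) (by simp [Prod.ext_iff])
      have hsum : ((0,k) + (1,0) : ℤ × ℤ) = (1,k) := by simp
      rw [hsum, h, map_zero, hν, map_smul, h, smul_zero, sub_zero] at hk1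
      rcases smul_eq_zero.mp hk1.symm with h' | h'
      · exact absurd h' (hsub (k * 1) (0 * 0) (by omega))
      · exact h'
  -- C2 : ρ (-1,k) kills ρ(1,0) v for all k
  have C2 : ∀ k : ℤ, ρ (-1, k) (ρ (1, 0) v) = 0 := by
    intro k
    by_cases hk : k = 0
    · subst hk; exact hBA
    · obtain ⟨μ, hμ⟩ := hspan (j+1) (ρ (0, k) (ρ (1, 0) v)) (ρ (1, 0) v)
        (hmem (0,k) (j+1) (j+1) _ (by simp [Prod.ext_iff, hk]) hAvm (by ring)) hAvm hA
      have hk1 := key (0,k) (-1,0) (ρ (1, 0) v)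
        (by simp [Prod.ext_iff, hk]) (by decide) (by simp [Prod.ext_iff])
      have hsum : ((0,k) + (-1,0) : ℤ × ℤ) = (-1,k) := by simp
      rw [hsum, hBA, map_zero, hμ, map_smul, hBA, smul_zero, sub_zero] at hk1
      rcases smul_eq_zero.mp hk1.symm with h' | h'
      · exact absurd h' (hsub (k * (-1)) (0 * 0) (by omega))
      · exact h'
  -- C3 : ρ (0,m) v = 0 for m ≠ 0
  have C3 : ∀ m : ℤ, m ≠ 0 → ρ (0, m) v = 0 := by
    intro m hm
    obtain ⟨a, ha⟩ := hspan (j+1) (ρ (1, m) v) (ρ (1, 0) v)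
      (hmem (1,m) j (j+1) v (by simp [Prod.ext_iff]) hv (by ring)) hAvm hA
    have hk1 := key (1,m) (-1,0) v (by simp [Prod.ext_iff]) (by decide)
      (by simp [Prod.ext_iff, hm])
    have hsum : ((1,m) + (-1,0) : ℤ × ℤ) = (0,m) := by simp
    rw [hsum, C1 m, ha, map_smul, hBA, smul_zero, sub_zero] at hk1
    rcases smul_eq_zero.mp hk1.symm with h' | h'
    · exact absurd h' (hsub (m * (-1)) (1 * 0) (by omega))
    · exact h'
  -- C4 : ρ (1,m) v = 0 for m ≠ 0
  have C4 : ∀ m : ℤ, m ≠ 0 → ρ (1, m) v = 0 := by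
    intro m hm
    by_contra hne
    obtain ⟨a, ha⟩ := hspan (j+1) (ρ (1, m) v) (ρ (1, 0) v)
      (hmem (1,m) j (j+1) v (by simp [Prod.ext_iff]) hv (by ring)) hAvm hA
    have ha0 : a ≠ 0 := by
      rintro rfl; rw [zero_smul] at ha; exact hne ha
    -- R0
    have hR0 : ρ (0, m) (ρ (1, 0) v)
        = ((q ^ (m * 1) - q ^ ((0:ℤ) * 0)) * a) • ρ (1, 0) v := by
      have hk1 := key (0,m) (1,0) v (by simp [Prod.ext_iff, hm]) (by decide)
        (by simp [Prod.ext_iff])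
      have hsum : ((0,m) + (1,0) : ℤ × ℤ) = (1,m) := by simp
      rw [hsum, C3 m hm, map_zero, sub_zero, ha, smul_smul] at hk1
      exact hk1
    -- R1
    have hR1 : ∀ k l : ℤ, k + l = m →
        ρ (-1, l) (ρ (1, k) (ρ (1, 0) v))
          = (-((q ^ (k * (-1)) - q ^ (1 * l)) * ((q ^ (m * 1) - q ^ ((0:ℤ) * 0)) * a))) • ρ (1, 0) v := by
      intro k l hkl
      have hk1 := key (1,k) (-1,l) (ρ (1, 0) v) (by simp [Prod.ext_iff]) (by simp [Prod.ext_iff])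
        (by simp [Prod.ext_iff]; omega)
      have hsum : ((1,k) + (-1,l) : ℤ × ℤ) = (0,m) := by simp [Prod.ext_iff]; omega
      rw [hsum, C2 l, map_zero, zero_sub, hR0, smul_smul] at hk1
      rw [neg_smul]
      exact neg_eq_iff_eq_neg.mp hk1
    -- ρ(1,0)(ρ(1,0) v) ≠ 0
    have hw0 : ρ (1, 0) (ρ (1, 0) v) ≠ 0 := by
      intro h0
      have h1 := hR1 0 m (by omega)
      rw [h0, map_zero] at h1
      have hc : (-((q ^ ((0:ℤ) * (-1)) - q ^ ((1:ℤ) * m)) * ((q ^ (m * 1) - q ^ ((0:ℤ) * 0)) * a))) ≠ 0 :=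
        neg_ne_zero.mpr (mul_ne_zero (hsub _ _ (by omega))
          (mul_ne_zero (hsub _ _ (by omega)) ha0))
      rcases smul_eq_zero.mp h1.symm with h' | h'
      · exact hc h'
      · exact hA h'
    -- ρ(-1,0)(ρ(1,m)(ρ(1,0) v)) ≠ 0
    have hc2 : ρ (-1, 0) (ρ (1, m) (ρ (1, 0) v)) ≠ 0 := by
      rw [hR1 m 0 (by omega)]
      intro h0
      rcases smul_eq_zero.mp h0 with h' | h'
      · exact absurd h' (neg_ne_zero.mpr (mul_ne_zero (hsub _ _ (by omega))
          (mul_ne_zero (hsub _ _ (by omega)) ha0)))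
      · exact hA h'
    -- but ρ(-1,0) kills ρ(1,0)(ρ(1,0) v)
    have hkill : ρ (-1, 0) (ρ (1, 0) (ρ (1, 0) v)) = 0 := by
      rw [← keyc (1,0) (-1,0) (ρ (1, 0) v) (by decide) (by decide) (by decide), hBA, map_zero]
    obtain ⟨t, ht⟩ := hspan (j+2) (ρ (1, m) (ρ (1, 0) v)) (ρ (1, 0) (ρ (1, 0) v))
      (hmem (1,m) (j+1) (j+2) _ (by simp [Prod.ext_iff]) hAvm (by ring))
      (hmem (1,0) (j+1) (j+2) _ (by decide) hAvm (by ring)) hw0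
    apply hc2
    rw [ht, map_smul, hkill, smul_zero]
  -- C5 : ρ (-1,-1) v = 0
  have C5 : ρ (-1, -1) v = 0 := by
    by_contra hne
    obtain ⟨b, hb⟩ := hspan (j-1) (ρ (-1, -1) v) (ρ (-1, 0) v)
      (hmem (-1,-1) j (j-1) v (by decide) hv (by ring)) hBvm hB
    have hb0 : b ≠ 0 := by
      rintro rfl; rw [zero_smul] at hb; exact hne hb
    -- R0'
    have hR0 : ρ (0, -1) (ρ (-1, 0) v)
        = ((q ^ ((-1) * (-1) : ℤ) - q ^ ((0:ℤ) * 0)) * b) • ρ (-1, 0) v := by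
      have hk1 := key (0,-1) (-1,0) v (by decide) (by decide) (by decide)
      have hsum : ((0,-1) + (-1,0) : ℤ × ℤ) = (-1,-1) := by decide
      rw [hsum, C3 (-1) (by omega), map_zero, sub_zero, hb, smul_smul] at hk1
      exact hk1
    -- R1'
    have hR1 : ∀ k l : ℤ, k + l = -1 →
        ρ (1, k) (ρ (-1, l) (ρ (-1, 0) v))
          = ((q ^ (k * (-1)) - q ^ (1 * l)) * ((q ^ ((-1) * (-1) : ℤ) - q ^ ((0:ℤ) * 0)) * b)) • ρ (-1, 0) v := by
      intro k l hkl
      have hk1 := key (1,k) (-1,l) (ρ (-1, 0) v) (by simp [Prod.ext_iff]) (by simp [Prod.ext_iff])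
        (by simp [Prod.ext_iff]; omega)
      have hsum : ((1,k) + (-1,l) : ℤ × ℤ) = (0,-1) := by simp [Prod.ext_iff]; omega
      rw [hsum, C1 k, map_zero, sub_zero, hR0, smul_smul] at hk1
      exact hk1
    -- u₁ := ρ(-1,0)(ρ(-1,0) v) ≠ 0
    have hu1 : ρ (-1, 0) (ρ (-1, 0) v) ≠ 0 := by
      intro h0
      have h1 := hR1 (-1) 0 (by omega)
      rw [h0, map_zero] at h1
      have hc : ((q ^ ((-1:ℤ) * (-1)) - q ^ ((1:ℤ) * 0)) * ((q ^ ((-1) * (-1) : ℤ) - q ^ ((0:ℤ) * 0)) * b)) ≠ 0 :=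
        mul_ne_zero (hsub _ _ (by omega)) (mul_ne_zero (hsub _ _ (by omega)) hb0)
      rcases smul_eq_zero.mp h1.symm with h' | h'
      · exact hc h'
      · exact hB h'
    -- ρ(1,0) does not kill ρ(-1,-1)(ρ(-1,0) v)
    have hc3 : ρ (1, 0) (ρ (-1, -1) (ρ (-1, 0) v)) ≠ 0 := by
      rw [hR1 0 (-1) (by omega)]
      intro h0
      rcases smul_eq_zero.mp h0 with h' | h'
      · exact absurd h' (mul_ne_zero (hsub _ _ (by omega))
          (mul_ne_zero (hsub _ _ (by omega)) hb0))
      · exact hB h'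
    -- but ρ(1,0) kills ρ(-1,0)(ρ(-1,0) v)
    have hkill : ρ (1, 0) (ρ (-1, 0) (ρ (-1, 0) v)) = 0 := by
      rw [keyc (1,0) (-1,0) (ρ (-1, 0) v) (by decide) (by decide) (by decide), h, map_zero]
    obtain ⟨t, ht⟩ := hspan (j-2) (ρ (-1, -1) (ρ (-1, 0) v)) (ρ (-1, 0) (ρ (-1, 0) v))
      (hmem (-1,-1) (j-1) (j-2) _ (by decide) hBvm (by ring))
      (hmem (-1,0) (j-1) (j-2) _ (by decide) hBvm (by ring)) hu1
    apply hc3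
    rw [ht, map_smul, hkill, smul_zero]
  -- ρ (2,1) v = 0
  have hZ : ρ (2, 1) v = 0 := by
    have hk1 := key (1,2) (1,-1) v (by decide) (by decide) (by decide)
    have hsum : ((1,2) + (1,-1) : ℤ × ℤ) = (2,1) := by decide
    rw [hsum, C4 (-1) (by omega), map_zero, C4 2 (by omega), map_zero, sub_zero] at hk1
    rcases smul_eq_zero.mp hk1.symm with h' | h'
    · exact absurd h' (hsub (2 * 1) (1 * (-1)) (by omega))
    · exact h'
  -- final contradiction
  apply hA
  have hk1 := key (2,1) (-1,-1) v (by decide) (by decide) (by decide)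
  have hsum : ((2,1) + (-1,-1) : ℤ × ℤ) = (1,0) := by decide
  rw [hsum, C5, map_zero, hZ, map_zero, sub_zero] at hk1
  rcases smul_eq_zero.mp hk1.symm with h' | h'
  · exact absurd h' (hsub (1 * (-1)) (2 * (-1)) (by omega))
  · exact h'
end

section
/- Let V = ⊕_{n∈ℤ} V_n be a ℤ-graded L-module of the intermediate series. If for some fixed n, t2^k.V_n = 0 for all k ∈ ℤ* and t1^{±1}.V_n = 0, then t1^j.V_n = 0 for all j ∈ ℤ* and (t1^j t2^k).V_n = 0 for all j, k ∈ ℤ*; hence V_n is a trivial L-submodule. -/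
/-- If `t2^k.V_n = 0` for all `k ∈ ℤ*` and `t1^{±1}.V_n = 0`, then `t1^j.V_n = 0` for all `j ∈ ℤ*` and `(t1^j t2^k).V_n = 0` for all `j, k ∈ ℤ*`; hence `V_n` is a trivial `L`-submodule. -/
theorem stmt_10_thm
    (q : ℂ) (hq0 : q ≠ 0) (hq : ∀ n : ℕ, 0 < n → q ^ n ≠ 1)
    (V : Type*) [AddCommGroup V] [Module ℂ V]
    (Vn : ℤ → Submodule ℂ V) (hdirect : DirectSum.IsInternal Vn)
    (ρ : ℤ × ℤ → V →ₗ[ℂ] V)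
    (hbr : ∀ p r : ℤ × ℤ, p ≠ (0, 0) → r ≠ (0, 0) →
      ρ p ∘ₗ ρ r - ρ r ∘ₗ ρ p =
        if p + r = (0, 0) then 0
        else (q ^ (p.2 * r.1) - q ^ (p.1 * r.2)) • ρ (p + r))
    (hgr : ∀ (p : ℤ × ℤ) (n : ℤ), p ≠ (0, 0) → ∀ v ∈ Vn n, ρ p v ∈ Vn (n + p.1))
    (hdim : ∀ n : ℤ, Module.rank ℂ (Vn n) ≤ 1)
    (n : ℤ) (ht2 : ∀ k : ℤ, k ≠ 0 → ∀ v ∈ Vn n, ρ (0, k) v = 0)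
    (h1 : ∀ v ∈ Vn n, ρ (1, 0) v = 0) (h2 : ∀ v ∈ Vn n, ρ (-1, 0) v = 0) :
    (∀ j : ℤ, j ≠ 0 → ∀ v ∈ Vn n, ρ (j, 0) v = 0) ∧
    (∀ j k : ℤ, j ≠ 0 → k ≠ 0 → ∀ v ∈ Vn n, ρ (j, k) v = 0) ∧
    (∀ p : ℤ × ℤ, p ≠ (0, 0) → ∀ v ∈ Vn n, ρ p v = 0) := by
  -- q^m = 1 only for m = 0
  have hpow : ∀ m : ℤ, q ^ m = 1 → m = 0 := by
    intro m hm
    by_contra hm0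
    rcases lt_or_gt_of_ne hm0 with h | h
    · have hmn : ((-m).toNat : ℤ) = -m := by omega
      have : q ^ ((-m).toNat) = 1 := by
        rw [← zpow_natCast, hmn, zpow_neg, hm, inv_one]
      exact hq _ (by omega) this
    · have hmn : (m.toNat : ℤ) = m := by omega
      have : q ^ (m.toNat) = 1 := by rw [← zpow_natCast, hmn, hm]
      exact hq _ (by omega) this
  have hinj : ∀ a b : ℤ, a ≠ b → q ^ a ≠ q ^ b := by
    intro a b hab h
    have h1 : q ^ (a - b) = 1 := by
      rw [zpow_sub₀ hq0, h, div_self (zpow_ne_zero _ hq0)]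
    exact hab (by have := hpow _ h1; omega)
  set Z : ℤ × ℤ → Prop := fun p => ∀ v ∈ Vn n, ρ p v = 0 with hZ
  have step : ∀ p r : ℤ × ℤ, p ≠ (0, 0) → r ≠ (0, 0) → p.2 * r.1 ≠ p.1 * r.2 →
      Z p → Z r → Z (p + r) := by
    rintro ⟨p1, p2⟩ ⟨r1, r2⟩ hp hr hc hZp hZr v hv
    have hb := hbr (p1, p2) (r1, r2) hp hr
    have hpr : (p1, p2) + (r1, r2) ≠ ((0 : ℤ), (0 : ℤ)) := by
      intro h
      rw [Prod.mk_add_mk, Prod.mk.injEq] at h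
      obtain ⟨ha, hb'⟩ := h
      apply hc
      have e1 : r1 = -p1 := by omega
      have e2 : r2 = -p2 := by omega
      subst e1; subst e2
      simp only
      ring
    rw [if_neg hpr] at hb
    have happ := LinearMap.congr_fun hb v
    simp only [LinearMap.sub_apply, LinearMap.comp_apply, LinearMap.smul_apply] at happ
    rw [hZp v hv, hZr v hv, map_zero, map_zero, sub_zero] at happ
    have hc' : q ^ (p2 * r1) - q ^ (p1 * r2) ≠ 0 := sub_ne_zero.mpr (hinj _ _ hc)
    have := happ.symm
    rw [smul_eq_zero] at this
    exact this.resolve_left hc'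
  -- basic facts
  have z10 : Z (1, 0) := h1
  have zm10 : Z (-1, 0) := h2
  have z0k : ∀ k : ℤ, k ≠ 0 → Z (0, k) := ht2
  have z1k : ∀ k : ℤ, Z (1, k) := by
    intro k
    rcases eq_or_ne k 0 with rfl | hk
    · exact z10
    · have := step (1, 0) (0, k) (by simp) (by simp [hk]) (by simpa using hk.symm) z10 (z0k k hk)
      simpa using this
  have zm1k : ∀ k : ℤ, Z (-1, k) := by
    intro k
    rcases eq_or_ne k 0 with rfl | hk
    · exact zm10
    · have := step (-1, 0) (0, k) (by simp) (by simp [hk])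
        (by simpa using fun h => hk (by omega)) zm10 (z0k k hk)
      simpa using this
  -- positive part: Z (m+1, k) for all m : ℕ, k : ℤ
  have zpos : ∀ m : ℕ, ∀ k : ℤ, Z ((m : ℤ) + 1, k) := by
    intro m
    induction m with
    | zero => simpa using z1k
    | succ m ih =>
      intro k
      rcases eq_or_ne k 0 with rfl | hk
      · -- use step (m+1, 1) (1, -1)
        have := step ((m : ℤ) + 1, 1) (1, -1)
          (by simp) (by simp) (by simp; omega) (ih 1) (z1k (-1))
        have he : ((m : ℤ) + 1, (1 : ℤ)) + (1, -1) = ((m : ℤ) + 1 + 1, 0) := by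
          simp [Prod.ext_iff]
        rw [he] at this
        convert this using 3 <;> push_cast <;> ring
      · -- use step (m+1, k) (1, 0)
        have := step ((m : ℤ) + 1, k) (1, 0)
          (by simp; omega) (by simp) (by simpa using hk) (ih k) z10
        have he : ((m : ℤ) + 1, k) + (1, 0) = ((m : ℤ) + 1 + 1, k) := by
          simp [Prod.ext_iff]
        rw [he] at this
        convert this using 3 <;> push_cast <;> ring
  have zneg : ∀ m : ℕ, ∀ k : ℤ, Z (-(m : ℤ) - 1, k) := by
    intro m
    induction m with
    | zero => simpa using zm1k
    | succ m ih =>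
      intro k
      rcases eq_or_ne k 0 with rfl | hk
      · have := step (-(m : ℤ) - 1, 1) (-1, -1)
          (by simp) (by simp) (by simp; omega) (ih 1) (zm1k (-1))
        have he : (-(m : ℤ) - 1, (1 : ℤ)) + (-1, -1) = (-(m : ℤ) - 1 - 1, 0) := by
          rw [Prod.mk_add_mk, Prod.mk.injEq]; constructor <;> ring
        rw [he] at this
        convert this using 3 <;> push_cast <;> ring
      · have := step (-(m : ℤ) - 1, k) (-1, 0)
          (by simp; omega) (by simp) (by simp; omega) (ih k) zm10
        have he : (-(m : ℤ) - 1, k) + (-1, 0) = (-(m : ℤ) - 1 - 1, k) := by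
          rw [Prod.mk_add_mk, Prod.mk.injEq]; constructor <;> ring
        rw [he] at this
        convert this using 3 <;> push_cast <;> ring
  have main : ∀ j k : ℤ, j ≠ 0 → Z (j, k) := by
    intro j k hj
    rcases lt_or_gt_of_ne hj with h | h
    · have hm : -(((-j - 1).toNat : ℤ)) - 1 = j := by omega
      have := zneg (-j - 1).toNat k
      rwa [hm] at this
    · have hm : (((j - 1).toNat : ℤ)) + 1 = j := by omega
      have := zpos (j - 1).toNat k
      rwa [hm] at this
  refine ⟨fun j hj => main j 0 hj, fun j k hj _ => main j k hj, ?_⟩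
  rintro ⟨a, b⟩ hp
  rcases eq_or_ne a 0 with rfl | ha
  · exact ht2 b (by simpa using hp)
  · exact main a b ha
end

section
/- (Lemma 3.1) If V = ⊕_{n∈ℤ} V_n is a ℤ-graded L-module of the intermediate series and the operator t1^1 ∘ t1^{-1} on V is degenerate (kills some nonzero homogeneous vector), then every V_n is a trivial L-submodule, i.e., L.V = 0. -/
/-!
Write `E = ρ (1, 0)` and `F = ρ (-1, 0)`. They commute, so `T = E ∘ F` preserves every `V_n`
and, as `dim V_n ≤ 1`, acts on it by a scalar. The scalar is `0` on `V_j`, and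
`T ∘ T = E ∘ T ∘ F = F ∘ T ∘ E` propagates this to `V_{n ± 1}`, so `T = 0`.
For `s ≠ 0` the operator `B = ρ (0, s)` is diagonal too, hence `E ∘ B ∘ F = F ∘ B ∘ E = 0`;
expanding `[[B, E], F]`, a nonzero multiple of `B`, then gives `B = 0`. Finally, for `m ≠ 0`,
`[ρ (0, 1), ρ (m, n - 1)]` is a nonzero multiple of `ρ (m, n)`.
-/

open Set

section RankOne

variable {K V : Type*} [Field K] [AddCommGroup V] [Module K V]

theorem exists_smul_of_mapsTo_of_rank_le_one {W : Submodule K V} (hW : Module.rank K W ≤ 1)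
    {f : V →ₗ[K] V} (hf : MapsTo f W W) : ∃ c : K, ∀ v ∈ W, f v = c • v := by
  obtain ⟨w, hw⟩ := rank_le_one_iff.mp hW
  obtain ⟨c, hc⟩ := hw ⟨f w, hf w.2⟩
  refine ⟨c, fun v hv => ?_⟩
  obtain ⟨a, ha⟩ := hw ⟨v, hv⟩
  have hv : v = a • (w : V) := (congrArg Subtype.val ha).symm
  have hfw : f w = c • (w : V) := (congrArg Subtype.val hc).symm
  rw [hv, map_smul, hfw, smul_comm]

theorem apply_eq_zero_of_apply_apply_eq_zero {W : Submodule K V} (hW : Module.rank K W ≤ 1)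
    {f : V →ₗ[K] V} (hf : MapsTo f W W) {v : V} (hv : v ∈ W) (hffv : f (f v) = 0) :
    f v = 0 := by
  obtain ⟨c, hc⟩ := exists_smul_of_mapsTo_of_rank_le_one hW hf
  rw [hc _ (hf hv), hc v hv, smul_smul, smul_eq_zero, mul_self_eq_zero] at hffv
  rcases hffv with rfl | rfl
  · rw [hc v hv, zero_smul]
  · exact map_zero f

variable {ι : Type*} {Vn : ι → Submodule K V}

theorem LinearMap.eq_zero_of_forall_mem_eq_zero (htop : ⨆ i, Vn i = ⊤) {f : V →ₗ[K] V}
    (hf : ∀ i, ∀ v ∈ Vn i, f v = 0) : f = 0 :=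
  LinearMap.ext_on (s := ⋃ i, (Vn i : Set V)) (by rw [← Submodule.iSup_eq_span, htop])
    fun v hv => by
      obtain ⟨i, hi⟩ := mem_iUnion.mp hv
      exact hf i v hi

theorem comp_comp_eq_zero_of_mapsTo (htop : ⨆ i, Vn i = ⊤)
    (hdim : ∀ i, Module.rank K (Vn i) ≤ 1) {A C D : V →ₗ[K] V} (hAC : A ∘ₗ C = 0)
    (hC : ∀ i, ∃ j, MapsTo C (Vn i) (Vn j)) (hD : ∀ i, MapsTo D (Vn i) (Vn i)) :
    A ∘ₗ D ∘ₗ C = 0 := by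
  refine LinearMap.eq_zero_of_forall_mem_eq_zero htop fun i v hv => ?_
  obtain ⟨j, hCj⟩ := hC i
  obtain ⟨c, hc⟩ := exists_smul_of_mapsTo_of_rank_le_one (hdim j) (hD j)
  have hACv : A (C v) = 0 := LinearMap.congr_fun hAC v
  simp only [LinearMap.comp_apply, hc _ (hCj hv), map_smul, hACv, smul_zero]

theorem comp_eq_zero_of_comm_of_apply_eq_zero {Vn : ℤ → Submodule K V} (htop : ⨆ n, Vn n = ⊤)
    (hdim : ∀ n, Module.rank K (Vn n) ≤ 1) {E F : V →ₗ[K] V} (hEF : E ∘ₗ F = F ∘ₗ E)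
    (hE : ∀ n, MapsTo E (Vn n) (Vn (n + 1))) (hF : ∀ n, MapsTo F (Vn n) (Vn (n - 1)))
    {j : ℤ} {v : V} (hv : v ∈ Vn j) (hv0 : v ≠ 0) (hEFv : E (F v) = 0) : E ∘ₗ F = 0 := by
  have hcomm (x : V) : E (F x) = F (E x) := LinearMap.congr_fun hEF x
  have hT (n : ℤ) : MapsTo (E ∘ₗ F) (Vn n) (Vn n) := fun w hw => by
    simpa using hE _ (hF n hw)
  have hbase : ∀ w ∈ Vn j, E (F w) = 0 := by
    obtain ⟨c, hc⟩ := exists_smul_of_mapsTo_of_rank_le_one (hdim j) (hT j)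
    have hc0 : c = 0 := by
      have := hc v hv
      rw [LinearMap.comp_apply, hEFv, eq_comm, smul_eq_zero] at this
      exact this.resolve_right hv0
    intro w hw
    simpa [hc0] using hc w hw
  suffices h : ∀ n, ∀ w ∈ Vn n, E (F w) = 0 from
    LinearMap.eq_zero_of_forall_mem_eq_zero htop h
  intro n
  induction n using Int.inductionOn' (b := j) with
  | zero => exact hbase
  | succ k _ ih =>
    intro w hw
    refine apply_eq_zero_of_apply_apply_eq_zero (hdim _) (hT _) hw ?_
    have hFw : F w ∈ Vn k := by simpa using hF _ hw
    simp only [LinearMap.comp_apply]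
    rw [← hcomm (F w), ih _ hFw, map_zero]
  | pred k _ ih =>
    intro w hw
    refine apply_eq_zero_of_apply_apply_eq_zero (hdim _) (hT _) hw ?_
    have hEw : E w ∈ Vn k := by simpa using hE _ hw
    simp only [LinearMap.comp_apply]
    rw [hcomm (E (F w)), hcomm w, ih _ hEw, map_zero]

theorem zpow_sub_zpow_ne_zero {q : K} (hq0 : q ≠ 0) (hq : ∀ n : ℕ, 0 < n → q ^ n ≠ 1) {a b : ℤ}
    (hab : a ≠ b) : q ^ a - q ^ b ≠ 0 := by
  intro h
  have h1 : q ^ (a - b) = 1 := by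
    rw [zpow_sub₀ hq0, sub_eq_zero.mp h, div_self (zpow_ne_zero _ hq0)]
  apply hq (a - b).natAbs (Int.natAbs_pos.mpr (sub_ne_zero.mpr hab))
  rcases Int.natAbs_eq (a - b) with he | he
  · rwa [← zpow_natCast, ← he]
  · rw [← zpow_natCast, ← neg_eq_iff_eq_neg.mpr he, zpow_neg, h1, inv_one]

end RankOne

section QAnalogVirasoro

variable {q : ℂ} {V : Type*} [AddCommGroup V] [Module ℂ V] {ρ : ℤ × ℤ → V →ₗ[ℂ] V}

theorem rho_add_eq_zero_of_rho_eq_zero (hq0 : q ≠ 0) (hq : ∀ n : ℕ, 0 < n → q ^ n ≠ 1)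
    (hbr : ∀ p r : ℤ × ℤ, p ≠ (0, 0) → r ≠ (0, 0) →
      ρ p ∘ₗ ρ r - ρ r ∘ₗ ρ p =
        if p + r = (0, 0) then 0
        else (q ^ (p.2 * r.1) - q ^ (p.1 * r.2)) • ρ (p + r))
    {p r : ℤ × ℤ} (hdet : p.2 * r.1 ≠ p.1 * r.2) (hp : ρ p = 0) : ρ (p + r) = 0 := by
  have hp0 : p ≠ (0, 0) := by rintro rfl; simp at hdet
  have hr0 : r ≠ (0, 0) := by rintro rfl; simp at hdet
  have hpr0 : p + r ≠ (0, 0) := by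
    intro h
    obtain rfl : r = -p := eq_neg_of_add_eq_zero_right h
    apply hdet
    simp only [Prod.fst_neg, Prod.snd_neg]
    ring
  have h := hbr p r hp0 hr0
  rw [if_neg hpr0, hp, LinearMap.zero_comp, LinearMap.comp_zero, sub_zero, eq_comm,
    smul_eq_zero] at h
  exact h.resolve_left (zpow_sub_zpow_ne_zero hq0 hq hdet)

theorem rho_one_comp_rho_neg_one_comm
    (hbr : ∀ p r : ℤ × ℤ, p ≠ (0, 0) → r ≠ (0, 0) →
      ρ p ∘ₗ ρ r - ρ r ∘ₗ ρ p =
        if p + r = (0, 0) then 0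
        else (q ^ (p.2 * r.1) - q ^ (p.1 * r.2)) • ρ (p + r)) :
    ρ (1, 0) ∘ₗ ρ (-1, 0) = ρ (-1, 0) ∘ₗ ρ (1, 0) := by
  have h := hbr (1, 0) (-1, 0) (by simp) (by simp)
  rwa [if_pos (by simp), sub_eq_zero] at h

theorem rho_degree_zero_eq_zero (hq0 : q ≠ 0) (hq : ∀ n : ℕ, 0 < n → q ^ n ≠ 1)
    (hbr : ∀ p r : ℤ × ℤ, p ≠ (0, 0) → r ≠ (0, 0) →
      ρ p ∘ₗ ρ r - ρ r ∘ₗ ρ p =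
        if p + r = (0, 0) then 0
        else (q ^ (p.2 * r.1) - q ^ (p.1 * r.2)) • ρ (p + r))
    {Vn : ℤ → Submodule ℂ V} (htop : ⨆ n, Vn n = ⊤) (hdim : ∀ n, Module.rank ℂ (Vn n) ≤ 1)
    (hgr : ∀ (p : ℤ × ℤ) (n : ℤ), p ≠ (0, 0) → ∀ v ∈ Vn n, ρ p v ∈ Vn (n + p.1))
    (hEF : ρ (1, 0) ∘ₗ ρ (-1, 0) = 0) (hFE : ρ (-1, 0) ∘ₗ ρ (1, 0) = 0)
    {s : ℤ} (hs : s ≠ 0) : ρ (0, s) = 0 := by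
  have hBE : ρ (0, s) ∘ₗ ρ (1, 0) - ρ (1, 0) ∘ₗ ρ (0, s) = (q ^ s - 1) • ρ (1, s) := by
    simpa [hs] using hbr (0, s) (1, 0) (by simpa using hs) (by simp)
  have hXF : ρ (1, s) ∘ₗ ρ (-1, 0) - ρ (-1, 0) ∘ₗ ρ (1, s) = ((q ^ s)⁻¹ - 1) • ρ (0, s) := by
    simpa [hs] using hbr (1, s) (-1, 0) (by simp) (by simp)
  have hB (n : ℤ) : MapsTo (ρ (0, s)) (Vn n) (Vn n) := fun v hv => by
    simpa using hgr (0, s) n (by simpa using hs) v hv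
  have hE (n : ℤ) : ∃ m, MapsTo (ρ (1, 0)) (Vn n) (Vn m) := ⟨_, hgr (1, 0) n (by simp)⟩
  have hF (n : ℤ) : ∃ m, MapsTo (ρ (-1, 0)) (Vn n) (Vn m) := ⟨_, hgr (-1, 0) n (by simp)⟩
  have hEBF := comp_comp_eq_zero_of_mapsTo htop hdim hEF hF hB
  have hFBE := comp_comp_eq_zero_of_mapsTo htop hdim hFE hE hB
  have key : ((q ^ s - 1) * ((q ^ s)⁻¹ - 1)) • ρ (0, s) = 0 := by
    rw [mul_smul, ← hXF, smul_sub, ← LinearMap.smul_comp, ← LinearMap.comp_smul, ← hBE]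
    simp only [LinearMap.sub_comp, LinearMap.comp_sub, LinearMap.comp_assoc, hEBF, hFBE]
    simp only [← LinearMap.comp_assoc, hEF, hFE, LinearMap.comp_zero, LinearMap.zero_comp,
      sub_zero]
  have hqs : q ^ s ≠ 1 := by simpa [sub_eq_zero] using zpow_sub_zpow_ne_zero hq0 hq hs
  exact (smul_eq_zero.mp key).resolve_left
    (mul_ne_zero (sub_ne_zero.mpr hqs) (sub_ne_zero.mpr (inv_ne_one.mpr hqs)))

end QAnalogVirasoro

/-- (Lemma 3.1) If the operator `t1^1 ∘ t1^{-1}` on `V` is degenerate (kills some nonzero homogeneous vector), then every `V_n` is a trivial `L`-submodule, i.e. `L.V = 0`. -/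
theorem stmt_11_thm
    (q : ℂ) (hq0 : q ≠ 0) (hq : ∀ n : ℕ, 0 < n → q ^ n ≠ 1)
    (V : Type*) [AddCommGroup V] [Module ℂ V]
    (Vn : ℤ → Submodule ℂ V) (hdirect : DirectSum.IsInternal Vn)
    (ρ : ℤ × ℤ → V →ₗ[ℂ] V)
    (hbr : ∀ p r : ℤ × ℤ, p ≠ (0, 0) → r ≠ (0, 0) →
      ρ p ∘ₗ ρ r - ρ r ∘ₗ ρ p =
        if p + r = (0, 0) then 0
        else (q ^ (p.2 * r.1) - q ^ (p.1 * r.2)) • ρ (p + r))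
    (hgr : ∀ (p : ℤ × ℤ) (n : ℤ), p ≠ (0, 0) → ∀ v ∈ Vn n, ρ p v ∈ Vn (n + p.1))
    (hdim : ∀ n : ℤ, Module.rank ℂ (Vn n) ≤ 1)
    (hdeg : ∃ (j : ℤ) (v : V), v ∈ Vn j ∧ v ≠ 0 ∧ ρ (1, 0) (ρ (-1, 0) v) = 0) :
    ∀ p : ℤ × ℤ, p ≠ (0, 0) → ρ p = 0 := by
  have htop := hdirect.submodule_iSup_eq_top
  have hcomm := rho_one_comp_rho_neg_one_comm hbr
  obtain ⟨j, v, hv, hv0, hEFv⟩ := hdeg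
  have hEF : ρ (1, 0) ∘ₗ ρ (-1, 0) = 0 :=
    comp_eq_zero_of_comm_of_apply_eq_zero htop hdim hcomm
      (fun n w hw => hgr (1, 0) n (by simp) w hw)
      (fun n w hw => by simpa [sub_eq_add_neg] using hgr (-1, 0) n (by simp) w hw) hv hv0 hEFv
  have hB (s : ℤ) (hs : s ≠ 0) : ρ (0, s) = 0 :=
    rho_degree_zero_eq_zero hq0 hq hbr htop hdim hgr hEF (hcomm ▸ hEF) hs
  rintro ⟨m, n⟩ hp
  by_cases hm : m = 0
  · subst hm
    exact hB n (by simpa using hp)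
  · simpa using rho_add_eq_zero_of_rho_eq_zero hq0 hq hbr (p := (0, 1)) (r := (m, n - 1))
      (by simpa using hm) (hB 1 one_ne_zero)
end

section
/- Suppose V = ⊕_{n∈ℤ} V_n is a ℤ-graded L-module of the intermediate series on which t1^1 ∘ t1^{-1} acts nondegenerately. Then dim V_n = 1 for all n ∈ ℤ, and there exist λ ∈ ℂ* and a basis {v_k ∈ V_k : k ∈ ℤ} such that t1^{±1}.v_k = λ v_{k±1} for all k. -/
/-!
Nondegeneracy of `t1^1 ∘ t1^{-1}` makes `t1^{±1}` injective on the pieces, so one nonzero piece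
forces all pieces to be nonzero, hence one-dimensional. There `t1^1 ∘ t1^{-1}` acts by scalars,
and since it commutes with `t1^1` these scalars all equal one `c ≠ 0`; as `V` is the sum of its
pieces, `t1^1 ∘ t1^{-1} = t1^{-1} ∘ t1^1 = c`. With `λ² = c`, `λ⁻¹ t1^1` is an automorphism of `V`
with inverse `λ⁻¹ t1^{-1}`, and the basis is its orbit `v_k = (λ⁻¹ t1^1)^(k - n₀) v₀` through any
nonzero `v₀ ∈ V_{n₀}`.
-/

section

variable {K V : Type*} [Field K] [AddCommGroup V] [Module K V]

theorem Submodule.exists_forall_mem_eq_smul_of_rank_le_one {W : Submodule K V}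
    (hW : Module.rank K W ≤ 1) {T : V →ₗ[K] V} (hT : Set.MapsTo T W W) :
    ∃ c : K, ∀ x ∈ W, T x = c • x := by
  obtain ⟨v₀, hv₀, hWv₀⟩ := (rank_submodule_le_one_iff W).mp hW
  obtain ⟨c, hc⟩ := mem_span_singleton.mp (hWv₀ (hT hv₀))
  refine ⟨c, fun x hx => ?_⟩
  obtain ⟨r, rfl⟩ := mem_span_singleton.mp (hWv₀ hx)
  rw [map_smul, ← hc, smul_comm]

theorem LinearMap.eq_smul_id_of_iSup_eq_top {ι : Type*} {W : ι → Submodule K V}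
    (hW : iSup W = ⊤) {T : V →ₗ[K] V} {c : K} (hT : ∀ i, ∀ x ∈ W i, T x = c • x) :
    T = c • LinearMap.id := by
  rw [← LinearMap.eqLocus_eq_top, eq_top_iff, ← hW]
  exact iSup_le fun i x hx => hT i x hx

variable (Vn : ℤ → Submodule K V) {A B : V →ₗ[K] V}

theorem forall_ne_bot_of_mapsTo_succ_pred (hA : ∀ n, Set.MapsTo A (Vn n) (Vn (n + 1)))
    (hB : ∀ n, Set.MapsTo B (Vn n) (Vn (n - 1)))
    (hA0 : ∀ n, ∀ x ∈ Vn n, x ≠ 0 → A x ≠ 0) (hB0 : ∀ n, ∀ x ∈ Vn n, x ≠ 0 → B x ≠ 0)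
    {n₀ : ℤ} (hn₀ : Vn n₀ ≠ ⊥) (n : ℤ) : Vn n ≠ ⊥ := by
  refine Int.inductionOn' n n₀ hn₀ (fun k _ ih => ?_) (fun k _ ih => ?_)
  all_goals obtain ⟨x, hx, hx0⟩ := (Submodule.ne_bot_iff _).mp ih
  · exact (Submodule.ne_bot_iff _).mpr ⟨A x, hA k hx, hA0 k x hx hx0⟩
  · exact (Submodule.ne_bot_iff _).mpr ⟨B x, hB k hx, hB0 k x hx hx0⟩

theorem exists_forall_mem_eq_smul_of_commute (hdim : ∀ n, Module.rank K (Vn n) ≤ 1)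
    (hne : ∀ n, Vn n ≠ ⊥) (hA : ∀ n, Set.MapsTo A (Vn n) (Vn (n + 1)))
    (hA0 : ∀ n, ∀ x ∈ Vn n, x ≠ 0 → A x ≠ 0) {T : V →ₗ[K] V}
    (hT : ∀ n, Set.MapsTo T (Vn n) (Vn n)) (hAT : Commute A T) :
    ∃ c : K, ∀ n, ∀ x ∈ Vn n, T x = c • x := by
  choose c hc using fun n => (Vn n).exists_forall_mem_eq_smul_of_rank_le_one (hdim n) (hT n)
  have hperiodic : Function.Periodic c 1 := by
    intro n
    obtain ⟨x, hx, hx0⟩ := (Submodule.ne_bot_iff _).mp (hne n)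
    refine smul_left_injective K (hA0 n x hx hx0) (?_ : c (n + 1) • A x = c n • A x)
    rw [← hc _ _ (hA n hx), ← map_smul, ← hc n x hx, ← Module.End.mul_apply, ← hAT.eq,
      Module.End.mul_apply]
  refine ⟨c 0, fun n x hx => ?_⟩
  rw [hc n x hx, ← hperiodic.zsmul_eq n, smul_eq_mul, mul_one]

theorem exists_orbit_of_mapsTo (e : V ≃ₗ[K] V) (he : ∀ n, Set.MapsTo e (Vn n) (Vn (n + 1)))
    (he' : ∀ n, Set.MapsTo e.symm (Vn n) (Vn (n - 1))) {n₀ : ℤ} {v₀ : V} (hv₀ : v₀ ∈ Vn n₀)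
    (hv₀0 : v₀ ≠ 0) :
    ∃ v : ℤ → V, (∀ k, v k ∈ Vn k) ∧ (∀ k, v k ≠ 0) ∧ (∀ k, e (v k) = v (k + 1)) ∧
      (∀ k, e.symm (v k) = v (k - 1)) := by
  set v : ℤ → V := fun k => (e ^ (k - n₀)) v₀
  have hsucc : ∀ k, e (v k) = v (k + 1) := fun k => by
    simp only [v, ← LinearEquiv.mul_apply, ← zpow_one_add]
    ring_nf
  have hpred : ∀ k, e.symm (v k) = v (k - 1) := fun k =>
    e.symm_apply_eq.mpr (by rw [hsucc, sub_add_cancel])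
  refine ⟨v, fun k => ?_, fun k => (e ^ (k - n₀)).map_ne_zero_iff.mpr hv₀0, hsucc, hpred⟩
  refine Int.inductionOn' k n₀ (by simpa [v] using hv₀) (fun k _ ih => ?_) (fun k _ ih => ?_)
  · exact hsucc k ▸ he k ih
  · exact hpred k ▸ he' k ih

theorem exists_ladder_of_mul_eq_smul_id (hA : ∀ n, Set.MapsTo A (Vn n) (Vn (n + 1)))
    (hB : ∀ n, Set.MapsTo B (Vn n) (Vn (n - 1))) (hAB : Commute A B) {μ : K} (hμ : μ ≠ 0)
    (hABμ : A * B = (μ * μ) • LinearMap.id) {n₀ : ℤ} {v₀ : V} (hv₀ : v₀ ∈ Vn n₀)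
    (hv₀0 : v₀ ≠ 0) :
    ∃ v : ℤ → V, (∀ k, v k ∈ Vn k) ∧ (∀ k, v k ≠ 0) ∧ (∀ k, A (v k) = μ • v (k + 1)) ∧
      (∀ k, B (v k) = μ • v (k - 1)) := by
  have hinv : ∀ {X Y : V →ₗ[K] V}, X * Y = (μ * μ) • LinearMap.id →
      (μ⁻¹ • X) ∘ₗ (μ⁻¹ • Y) = LinearMap.id := fun hXY => by
    rw [← Module.End.mul_eq_comp, smul_mul_smul_comm, hXY, smul_smul, ← mul_inv,
      inv_mul_cancel₀ (mul_ne_zero hμ hμ), one_smul]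
  let e : V ≃ₗ[K] V := .ofLinearMap (μ⁻¹ • A) (μ⁻¹ • B) (hinv hABμ) (hinv (hAB.eq ▸ hABμ))
  obtain ⟨v, hv, hv0, he, he'⟩ := exists_orbit_of_mapsTo Vn e
    (fun n x hx => Submodule.smul_mem _ _ (hA n hx))
    (fun n x hx => Submodule.smul_mem _ _ (hB n hx)) hv₀ hv₀0
  refine ⟨v, hv, hv0, fun k => ?_, fun k => ?_⟩
  · rw [← he k]; simp [e, smul_smul, hμ]
  · rw [← he' k]; simp [e, smul_smul, hμ]

end

theorem stmt_12_thm_general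
    (q : ℂ)
    (V : Type*) [AddCommGroup V] [Module ℂ V]
    (Vn : ℤ → Submodule ℂ V) (hdirect : DirectSum.IsInternal Vn)
    (ρ : ℤ × ℤ → V →ₗ[ℂ] V)
    (hbr : ∀ p r : ℤ × ℤ, p ≠ (0, 0) → r ≠ (0, 0) →
      ρ p ∘ₗ ρ r - ρ r ∘ₗ ρ p =
        if p + r = (0, 0) then 0
        else (q ^ (p.2 * r.1) - q ^ (p.1 * r.2)) • ρ (p + r))
    (hgr : ∀ (p : ℤ × ℤ) (n : ℤ), p ≠ (0, 0) → ∀ v ∈ Vn n, ρ p v ∈ Vn (n + p.1))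
    (hdim : ∀ n : ℤ, Module.rank ℂ (Vn n) ≤ 1)
    (hVne : ∃ n : ℤ, Vn n ≠ ⊥)
    (hnd : ∀ (n : ℤ) (v : V), v ∈ Vn n → v ≠ 0 → ρ (1, 0) (ρ (-1, 0) v) ≠ 0) :
    (∀ n : ℤ, Module.rank ℂ (Vn n) = 1) ∧
    ∃ lam : ℂ, lam ≠ 0 ∧ ∃ v : ℤ → V,
      (∀ k, v k ∈ Vn k) ∧ (∀ k, v k ≠ 0) ∧
      (∀ k, ρ (1, 0) (v k) = lam • v (k + 1)) ∧
      (∀ k, ρ (-1, 0) (v k) = lam • v (k - 1)) := by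
  set A := ρ (1, 0)
  set B := ρ (-1, 0)
  have hAB : Commute A B := by
    have h := hbr (1, 0) (-1, 0) (by simp) (by simp)
    rwa [if_pos (by simp), sub_eq_zero] at h
  have hA : ∀ n, Set.MapsTo A (Vn n) (Vn (n + 1)) := fun n x hx => hgr (1, 0) n (by simp) x hx
  have hB : ∀ n, Set.MapsTo B (Vn n) (Vn (n - 1)) := fun n x hx => by
    simpa [← sub_eq_add_neg] using hgr (-1, 0) n (by simp) x hx
  have hA0 : ∀ n, ∀ x ∈ Vn n, x ≠ 0 → A x ≠ 0 := fun n x hx hx0 h =>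
    hnd n x hx hx0 (by rw [← Module.End.mul_apply, hAB.eq, Module.End.mul_apply, h, map_zero])
  have hB0 : ∀ n, ∀ x ∈ Vn n, x ≠ 0 → B x ≠ 0 := fun n x hx hx0 h =>
    hnd n x hx hx0 (by rw [h, map_zero])
  obtain ⟨n₀, hn₀⟩ := hVne
  have hne := forall_ne_bot_of_mapsTo_succ_pred Vn hA hB hA0 hB0 hn₀
  obtain ⟨c, hc⟩ := exists_forall_mem_eq_smul_of_commute Vn hdim hne hA hA0
    (fun n x hx => by simpa using hA _ (hB n hx)) ((Commute.refl A).mul_right hAB)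
  obtain ⟨v₀, hv₀, hv₀0⟩ := (Submodule.ne_bot_iff _).mp hn₀
  have hc0 : c ≠ 0 := by
    rintro rfl
    exact hnd n₀ v₀ hv₀ hv₀0 (by simpa using hc n₀ v₀ hv₀)
  obtain ⟨μ, rfl⟩ := IsAlgClosed.exists_eq_mul_self c
  refine ⟨fun n => le_antisymm (hdim n) ?_, μ, left_ne_zero_of_mul hc0,
    exists_ladder_of_mul_eq_smul_id Vn hA hB hAB (left_ne_zero_of_mul hc0)
      (LinearMap.eq_smul_id_of_iSup_eq_top hdirect.submodule_iSup_eq_top hc) hv₀ hv₀0⟩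
  exact Cardinal.one_le_iff_ne_zero.mpr (Submodule.rank_eq_zero.not.mpr (hne n))

/-- If `t1^1 ∘ t1^{-1}` acts nondegenerately on the nonzero module `V`, then `dim V_n = 1` for all `n`, and there are `λ ∈ ℂ*` and a basis `v_k ∈ V_k` with `t1^{±1}.v_k = λ v_{k±1}`. -/
theorem stmt_12_thm
    (q : ℂ) (hq0 : q ≠ 0) (hq : ∀ n : ℕ, 0 < n → q ^ n ≠ 1)
    (V : Type*) [AddCommGroup V] [Module ℂ V]
    (Vn : ℤ → Submodule ℂ V) (hdirect : DirectSum.IsInternal Vn)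
    (ρ : ℤ × ℤ → V →ₗ[ℂ] V)
    (hbr : ∀ p r : ℤ × ℤ, p ≠ (0, 0) → r ≠ (0, 0) →
      ρ p ∘ₗ ρ r - ρ r ∘ₗ ρ p =
        if p + r = (0, 0) then 0
        else (q ^ (p.2 * r.1) - q ^ (p.1 * r.2)) • ρ (p + r))
    (hgr : ∀ (p : ℤ × ℤ) (n : ℤ), p ≠ (0, 0) → ∀ v ∈ Vn n, ρ p v ∈ Vn (n + p.1))
    (hdim : ∀ n : ℤ, Module.rank ℂ (Vn n) ≤ 1)
    (hVne : ∃ n : ℤ, Vn n ≠ ⊥)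
    (hnd : ∀ (n : ℤ) (v : V), v ∈ Vn n → v ≠ 0 → ρ (1, 0) (ρ (-1, 0) v) ≠ 0) :
    (∀ n : ℤ, Module.rank ℂ (Vn n) = 1) ∧
    ∃ lam : ℂ, lam ≠ 0 ∧ ∃ v : ℤ → V,
      (∀ k, v k ∈ Vn k) ∧ (∀ k, v k ≠ 0) ∧
      (∀ k, ρ (1, 0) (v k) = lam • v (k + 1)) ∧
      (∀ k, ρ (-1, 0) (v k) = lam • v (k - 1)) :=
  stmt_12_thm_general q V Vn hdirect ρ hbr hgr hdim hVne hnd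
end
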